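/- Assume 2k ≤ n and δ_{2k} < 1. Let x̂ ∈ ℝⁿ have at most k nonzero entries and satisfy ‖A x̂ − y‖₂ ≤ ‖e‖₂. If min_{i∈S*} |x*_i| > (2/√(1−δ_{2k})) ‖e‖₂, then S* ⊆ supp(x̂) and ‖x̂ − x*‖₂ ≤ (2/√(1−δ_k)) ‖e‖₂. -/
import Mathlib


noncomputable section
open Finset Matrix

/-- Support of a vector as a finite set of indices. -/
def spt {d : ℕ} (x : Fin d → ℝ) : Finset (Fin d) :=
  Finset.univ.filter (fun i => x i ≠ 0)

/-- Euclidean (ℓ²) norm of a vector. -/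
def l2norm {d : ℕ} (v : Fin d → ℝ) : ℝ :=
  Real.sqrt (∑ i, (v i) ^ 2)

/-- Sup (ℓ∞) norm of a vector. -/
def supNorm {d : ℕ} (v : Fin d → ℝ) : ℝ :=
  ⨆ i, |v i|

/-- The `l`-th restricted isometry constant of `A`: the smallest `δ ≥ 0` such that
`(1-δ)‖x‖₂² ≤ ‖Ax‖₂² ≤ (1+δ)‖x‖₂²` for every `x` with at most `l` nonzero entries. -/
def ripConst {m n : ℕ} (A : Matrix (Fin m) (Fin n) ℝ) (l : ℕ) : ℝ :=
  sInf {δ : ℝ | 0 ≤ δ ∧ ∀ x : Fin n → ℝ, (spt x).card ≤ l →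
    (1 - δ) * ∑ i, (x i) ^ 2 ≤ ∑ j, (A.mulVec x j) ^ 2 ∧
    ∑ j, (A.mulVec x j) ^ 2 ≤ (1 + δ) * ∑ i, (x i) ^ 2}

namespace SparseAux

def ripSet {m n : ℕ} (A : Matrix (Fin m) (Fin n) ℝ) (l : ℕ) : Set ℝ :=
  {δ : ℝ | 0 ≤ δ ∧ ∀ x : Fin n → ℝ, (spt x).card ≤ l →
    (1 - δ) * ∑ i, (x i) ^ 2 ≤ ∑ j, (A.mulVec x j) ^ 2 ∧
    ∑ j, (A.mulVec x j) ^ 2 ≤ (1 + δ) * ∑ i, (x i) ^ 2}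

lemma ripConst_eq {m n : ℕ} (A : Matrix (Fin m) (Fin n) ℝ) (l : ℕ) :
    ripConst A l = sInf (ripSet A l) := rfl

lemma ripSet_nonempty {m n : ℕ} (A : Matrix (Fin m) (Fin n) ℝ) (l : ℕ) :
    (ripSet A l).Nonempty := by
  refine ⟨max 1 (∑ j, ∑ i, (A j i) ^ 2),
    le_trans zero_le_one (le_max_left _ _), fun x _ => ?_⟩
  have hxs : (0:ℝ) ≤ ∑ i, (x i) ^ 2 := Finset.sum_nonneg fun i _ => sq_nonneg _
  constructor
  · have h1 : 1 - max 1 (∑ j, ∑ i, (A j i) ^ 2) ≤ 0 := by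
      have := le_max_left 1 (∑ j, ∑ i, (A j i) ^ 2); linarith
    have h2 : (0:ℝ) ≤ ∑ j, (A.mulVec x j) ^ 2 :=
      Finset.sum_nonneg fun j _ => sq_nonneg _
    nlinarith
  · calc ∑ j, (A.mulVec x j) ^ 2
        ≤ ∑ j, (∑ i, (A j i) ^ 2) * ∑ i, (x i) ^ 2 := by
          refine Finset.sum_le_sum fun j _ => ?_
          simpa [Matrix.mulVec, dotProduct] using
            Finset.sum_mul_sq_le_sq_mul_sq Finset.univ (A j) x
      _ = (∑ j, ∑ i, (A j i) ^ 2) * ∑ i, (x i) ^ 2 := by rw [Finset.sum_mul]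
      _ ≤ (1 + max 1 (∑ j, ∑ i, (A j i) ^ 2)) * ∑ i, (x i) ^ 2 := by
          refine mul_le_mul_of_nonneg_right ?_ hxs
          have := le_max_right 1 (∑ j, ∑ i, (A j i) ^ 2); linarith

lemma ripSet_bddBelow {m n : ℕ} (A : Matrix (Fin m) (Fin n) ℝ) (l : ℕ) :
    BddBelow (ripSet A l) := ⟨0, fun _ hδ => hδ.1⟩

lemma ripSet_closed {m n : ℕ} (A : Matrix (Fin m) (Fin n) ℝ) (l : ℕ) :
    IsClosed (ripSet A l) := by
  have : ripSet A l = Set.Ici (0:ℝ) ∩ ⋂ (x : Fin n → ℝ) (_ : (spt x).card ≤ l),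
      ({δ : ℝ | (1 - δ) * ∑ i, (x i) ^ 2 ≤ ∑ j, (A.mulVec x j) ^ 2} ∩
       {δ : ℝ | ∑ j, (A.mulVec x j) ^ 2 ≤ (1 + δ) * ∑ i, (x i) ^ 2}) := by
    ext δ
    simp only [ripSet, Set.mem_inter_iff, Set.mem_Ici, Set.mem_iInter, Set.mem_setOf_eq,
      Set.mem_sep_iff]
  rw [this]
  refine isClosed_Ici.inter (isClosed_iInter fun x => isClosed_iInter fun _ =>
    IsClosed.inter ?_ ?_)
  · exact isClosed_le (by continuity) continuous_const
  · exact isClosed_le continuous_const (by continuity)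

lemma ripConst_mem {m n : ℕ} (A : Matrix (Fin m) (Fin n) ℝ) (l : ℕ) :
    ripConst A l ∈ ripSet A l := by
  rw [ripConst_eq]
  exact (ripSet_closed A l).csInf_mem (ripSet_nonempty A l) (ripSet_bddBelow A l)

lemma ripConst_nonneg {m n : ℕ} (A : Matrix (Fin m) (Fin n) ℝ) (l : ℕ) :
    0 ≤ ripConst A l := (ripConst_mem A l).1

lemma ripConst_mono {m n : ℕ} (A : Matrix (Fin m) (Fin n) ℝ) {l₁ l₂ : ℕ} (h : l₁ ≤ l₂) :
    ripConst A l₁ ≤ ripConst A l₂ := by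
  rw [ripConst_eq, ripConst_eq]
  refine csInf_le_csInf (ripSet_bddBelow A l₁) (ripSet_nonempty A l₂) ?_
  rintro δ ⟨h0, hδ⟩
  exact ⟨h0, fun x hx => hδ x (hx.trans h)⟩

lemma l2norm_nonneg {d : ℕ} (v : Fin d → ℝ) : 0 ≤ l2norm v := Real.sqrt_nonneg _

lemma l2norm_sq {d : ℕ} (v : Fin d → ℝ) : l2norm v ^ 2 = ∑ i, (v i) ^ 2 :=
  Real.sq_sqrt (Finset.sum_nonneg fun i _ => sq_nonneg _)

lemma l2norm_eq_norm {d : ℕ} (v : Fin d → ℝ) :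
    l2norm v = ‖(WithLp.equiv 2 (Fin d → ℝ)).symm v‖ := by
  rw [EuclideanSpace.norm_eq]
  simp [l2norm, sq_abs]

lemma l2norm_add_le {d : ℕ} (a b : Fin d → ℝ) :
    l2norm (a + b) ≤ l2norm a + l2norm b := by
  simp only [l2norm_eq_norm]
  exact norm_add_le ((WithLp.equiv 2 (Fin d → ℝ)).symm a) ((WithLp.equiv 2 (Fin d → ℝ)).symm b)

lemma abs_le_l2norm {d : ℕ} (v : Fin d → ℝ) (i : Fin d) : |v i| ≤ l2norm v := by
  rw [← Real.sqrt_sq_eq_abs]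
  exact Real.sqrt_le_sqrt (Finset.single_le_sum (f := fun i => (v i) ^ 2)
    (fun i _ => sq_nonneg _) (Finset.mem_univ i))

lemma spt_sub_subset {d : ℕ} (a b : Fin d → ℝ) : spt (a - b) ⊆ spt a ∪ spt b := by
  intro i hi
  simp only [spt, Finset.mem_filter, Finset.mem_union, Finset.mem_univ, true_and,
    Pi.sub_apply] at hi ⊢
  by_contra hc
  push_neg at hc
  rw [hc.1, hc.2] at hi
  simp at hi

lemma bound_helper {δ s E t : ℝ} (hδ1 : δ < 1) (hs : 0 ≤ s) (hE : 0 ≤ E)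
    (h1 : (1 - δ) * s ^ 2 ≤ t) (h2 : t ≤ (2 * E) ^ 2) :
    s ≤ 2 / Real.sqrt (1 - δ) * E := by
  have hpos : 0 < 1 - δ := by linarith
  have hsq : 0 < Real.sqrt (1 - δ) := Real.sqrt_pos.2 hpos
  rw [div_mul_eq_mul_div, le_div_iff₀ hsq]
  have hr : Real.sqrt (1 - δ) ^ 2 = 1 - δ := Real.sq_sqrt hpos.le
  have h3 : (s * Real.sqrt (1 - δ)) ^ 2 ≤ (2 * E) ^ 2 := by nlinarith
  calc s * Real.sqrt (1 - δ) = Real.sqrt ((s * Real.sqrt (1 - δ)) ^ 2) :=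
        (Real.sqrt_sq (by positivity)).symm
    _ ≤ Real.sqrt ((2 * E) ^ 2) := Real.sqrt_le_sqrt h3
    _ = 2 * E := Real.sqrt_sq (by positivity)

end SparseAux

open SparseAux

/-- If a `k`-sparse `x̂` fits the data at least as well as `x*` and
`min_{i∈S*}|x*_i| > (2/√(1−δ_{2k}))‖e‖₂`, then `S* ⊆ supp(x̂)` and
`‖x̂ − x*‖₂ ≤ (2/√(1−δ_k))‖e‖₂`. -/
theorem sparse_best_iterate_recovery {m n k : ℕ} (hm : 0 < m) (hk : 0 < k)
    (hkn : 2 * k ≤ n)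
    (A : Matrix (Fin m) (Fin n) ℝ) (hRIP : ripConst A (2 * k) < 1)
    (xstar : Fin n → ℝ) (hspars : (spt xstar).card ≤ k) (hne : (spt xstar).Nonempty)
    (e : Fin m → ℝ) (y : Fin m → ℝ) (hy : y = A.mulVec xstar + e)
    (xhat : Fin n → ℝ) (hxhat : (spt xhat).card ≤ k)
    (hfit : l2norm (A.mulVec xhat - y) ≤ l2norm e)
    (hmin : (spt xstar).inf' hne (fun i => |xstar i|) >
      (2 / Real.sqrt (1 - ripConst A (2 * k))) * l2norm e) :
    spt xstar ⊆ spt xhat ∧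
      l2norm (xhat - xstar) ≤ (2 / Real.sqrt (1 - ripConst A k)) * l2norm e := by
  set h := xhat - xstar with hh_def
  have hE : 0 ≤ l2norm e := l2norm_nonneg e
  -- A h = (A xhat - y) + e
  have hAh : A.mulVec h = (A.mulVec xhat - y) + e := by
    rw [hh_def, Matrix.mulVec_sub, hy]
    funext j
    simp [Pi.sub_apply, Pi.add_apply]
    ring
  have hAh_le : l2norm (A.mulVec h) ≤ 2 * l2norm e := by
    rw [hAh]
    calc l2norm ((A.mulVec xhat - y) + e) ≤ l2norm (A.mulVec xhat - y) + l2norm e :=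
          l2norm_add_le _ _
      _ ≤ 2 * l2norm e := by linarith
  have hAh_sq : ∑ j, (A.mulVec h j) ^ 2 ≤ (2 * l2norm e) ^ 2 := by
    rw [← l2norm_sq]
    exact pow_le_pow_left₀ (l2norm_nonneg _) hAh_le 2
  -- h is 2k-sparse
  have hcard2k : (spt h).card ≤ 2 * k := by
    calc (spt h).card ≤ (spt xhat ∪ spt xstar).card :=
          Finset.card_le_card (spt_sub_subset xhat xstar)
      _ ≤ (spt xhat).card + (spt xstar).card := Finset.card_union_le _ _
      _ ≤ 2 * k := by omega
  -- RIP at 2k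
  obtain ⟨hδ0, hspec⟩ := ripConst_mem A (2 * k)
  have hlow := (hspec h hcard2k).1
  rw [← l2norm_sq] at hlow
  have hkey : l2norm h ≤ 2 / Real.sqrt (1 - ripConst A (2 * k)) * l2norm e :=
    bound_helper hRIP (l2norm_nonneg h) hE hlow hAh_sq
  -- Part 1
  have hsub : spt xstar ⊆ spt xhat := by
    intro i hi
    simp only [spt, Finset.mem_filter, Finset.mem_univ, true_and] at hi ⊢
    intro hz
    have h1 : |xstar i| ≤ l2norm h := by
      have : |h i| = |xstar i| := by
        rw [hh_def]; simp [Pi.sub_apply, hz]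
      rw [← this]
      exact abs_le_l2norm h i
    have h2 : (spt xstar).inf' hne (fun i => |xstar i|) ≤ |xstar i| := by
      apply Finset.inf'_le
      simp only [spt, Finset.mem_filter, Finset.mem_univ, true_and]
      exact hi
    linarith
  refine ⟨hsub, ?_⟩
  -- Part 2: h is k-sparse
  have hcardk : (spt h).card ≤ k := by
    have : spt h ⊆ spt xhat := by
      intro i hi
      rcases Finset.mem_union.1 (spt_sub_subset xhat xstar hi) with h1 | h1
      · exact h1
      · exact hsub h1
    exact (Finset.card_le_card this).trans hxhat
  obtain ⟨hδ0k, hspeck⟩ := ripConst_mem A k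
  have hδk1 : ripConst A k < 1 :=
    lt_of_le_of_lt (ripConst_mono A (by omega)) hRIP
  have hlowk := (hspeck h hcardk).1
  rw [← l2norm_sq] at hlowk
  exact bound_helper hδk1 (l2norm_nonneg h) hE hlowk hAh_sq

end
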